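/- The supremum of the set E equals 1/2. Concretely, the numbers x_n = (n(n+1) - 6)/(2(n(n+1) - 2)) belong to E for every integer n ≥ 3, satisfy x_n < 1/2, and converge to 1/2 as n → ∞. -/

import Mathlib

/-!
Writing `λ = l(l+1) ≥ 2`, the square root in the definition of `E_ν` is at most `νλ`, because
`(νλ)² - 2λν(ν + λ - 2) = λν(ν - 2)(λ - 2) ≥ 0`; so for `ν > 2` every element of `E_ν` is at most
`1/2`. The choice `l = 1`, `s = 1` gives the element `1/2 - 2/(ν - 2) = (ν - 6)/(2(ν - 2))` of `E_ν`,
which tends to `1/2` as `ν = n(n+1) → ∞`.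
-/

/-- The set of exceptional values `E_ν` for a real parameter ν. -/
def exceptionalSet (ν : ℝ) : Set ℝ :=
  { x | (∃ l : ℤ, 1 ≤ l ∧ ∃ s : ℝ, (s = 1 ∨ s = -1) ∧
      x = 1 / 2 - (ν * ((l : ℝ) * ((l : ℝ) + 1)) +
        s * Real.sqrt (2 * ((l : ℝ) * ((l : ℝ) + 1)) * ν *
          (ν + (l : ℝ) * ((l : ℝ) + 1) - 2))) / (2 * ν * (ν - 2))) ∧
    x ≠ 1 / 2 }

/-- The union `E = ⋃_{n ≥ 2} E_{n(n+1)}`. -/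
def exceptionalUnion : Set ℝ :=
  ⋃ n ∈ { n : ℤ | 2 ≤ n }, exceptionalSet ((n : ℝ) * ((n : ℝ) + 1))

open Filter Topology

lemma sqrt_le_mul_of_two_le {ν L : ℝ} (hν : 2 ≤ ν) (hL : 2 ≤ L) :
    Real.sqrt (2 * L * ν * (ν + L - 2)) ≤ ν * L := by
  rw [Real.sqrt_le_left (by positivity)]
  have hgap : (ν * L) ^ 2 - 2 * L * ν * (ν + L - 2) = L * ν * ((ν - 2) * (L - 2)) := by ring
  have : 0 ≤ L * ν * ((ν - 2) * (L - 2)) := by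
    have := mul_nonneg (sub_nonneg.2 hν) (sub_nonneg.2 hL)
    positivity
  linarith

lemma le_half_of_mem_exceptionalSet {ν x : ℝ} (hν : 2 < ν) (hx : x ∈ exceptionalSet ν) :
    x ≤ 1 / 2 := by
  obtain ⟨⟨l, hl, s, hs, rfl⟩, -⟩ := hx
  have hl' : (1 : ℝ) ≤ l := by exact_mod_cast hl
  set L : ℝ := (l : ℝ) * ((l : ℝ) + 1)
  have hL : 2 ≤ L := by nlinarith
  have hroot := sqrt_le_mul_of_two_le hν.le hL
  have hnum : 0 ≤ ν * L + s * Real.sqrt (2 * L * ν * (ν + L - 2)) := by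
    rcases hs with rfl | rfl
    · have : 0 ≤ ν * L := by positivity
      have := Real.sqrt_nonneg (2 * L * ν * (ν + L - 2))
      linarith
    · linarith
  have hden : 0 < 2 * ν * (ν - 2) := by have := sub_pos.2 hν; positivity
  linarith [div_nonneg hnum hden.le]

lemma le_half_of_mem_exceptionalUnion {x : ℝ} (hx : x ∈ exceptionalUnion) : x ≤ 1 / 2 := by
  obtain ⟨n, hn, hx⟩ := Set.mem_iUnion₂.1 hx
  have hn' : (2 : ℝ) ≤ n := by exact_mod_cast hn
  exact le_half_of_mem_exceptionalSet (by nlinarith) hx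

lemma sub_six_div_lt_half {ν : ℝ} (hν : 2 < ν) : (ν - 6) / (2 * (ν - 2)) < 1 / 2 := by
  rw [div_lt_div_iff₀ (by linarith) two_pos]
  linarith

lemma sub_six_div_mem_exceptionalSet {ν : ℝ} (hν : 2 < ν) :
    (ν - 6) / (2 * (ν - 2)) ∈ exceptionalSet ν := by
  refine ⟨⟨1, le_rfl, 1, Or.inl rfl, ?_⟩, (sub_six_div_lt_half hν).ne⟩
  push_cast
  rw [show (2 : ℝ) * (1 * (1 + 1)) * ν * (ν + 1 * (1 + 1) - 2) = (2 * ν) ^ 2 by ring,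
    Real.sqrt_sq (by linarith)]
  have : ν - 2 ≠ 0 := by linarith
  have : ν ≠ 0 := by linarith
  field_simp
  ring

lemma tendsto_sub_six_div_atTop :
    Tendsto (fun ν : ℝ => (ν - 6) / (2 * (ν - 2))) atTop (𝓝 (1 / 2)) := by
  have hinv : Tendsto (fun ν : ℝ => (ν - 2)⁻¹) atTop (𝓝 0) :=
    (tendsto_atTop_add_const_right _ (-2) tendsto_id).inv_tendsto_atTop
  have hlim : Tendsto (fun ν : ℝ => 1 / 2 - 2 * (ν - 2)⁻¹) atTop (𝓝 (1 / 2)) := by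
    simpa using (hinv.const_mul 2).const_sub (1 / 2 : ℝ)
  refine hlim.congr' ?_
  filter_upwards [eventually_gt_atTop 2] with ν hν
  have : ν - 2 ≠ 0 := by linarith
  field_simp
  ring

lemma tendsto_natCast_mul_succ_atTop :
    Tendsto (fun n : ℕ => (n : ℝ) * ((n : ℝ) + 1)) atTop atTop :=
  tendsto_natCast_atTop_atTop.atTop_mul_atTop₀
    (tendsto_atTop_add_const_right _ 1 tendsto_natCast_atTop_atTop)

/-- The supremum of E is 1/2: the values xₙ = (n(n+1)-6)/(2(n(n+1)-2)) lie in E for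
all integers n ≥ 3, are strictly less than 1/2, and converge to 1/2. -/
theorem exceptionalUnion_sSup_eq_half :
    sSup exceptionalUnion = 1 / 2 ∧
    (∀ n : ℤ, 3 ≤ n →
      (((n : ℝ) * ((n : ℝ) + 1) - 6) / (2 * ((n : ℝ) * ((n : ℝ) + 1) - 2)) ∈ exceptionalUnion ∧
        ((n : ℝ) * ((n : ℝ) + 1) - 6) / (2 * ((n : ℝ) * ((n : ℝ) + 1) - 2)) < 1 / 2)) ∧
    Filter.Tendsto
      (fun n : ℕ => (((n : ℝ) * ((n : ℝ) + 1) - 6) / (2 * ((n : ℝ) * ((n : ℝ) + 1) - 2))))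
      Filter.atTop (nhds (1 / 2)) := by
  have hν : ∀ n : ℤ, 3 ≤ n → 2 < (n : ℝ) * ((n : ℝ) + 1) := fun n hn => by
    have : (3 : ℝ) ≤ n := by exact_mod_cast hn
    nlinarith
  have hmem : ∀ n : ℤ, 3 ≤ n →
      ((n : ℝ) * ((n : ℝ) + 1) - 6) / (2 * ((n : ℝ) * ((n : ℝ) + 1) - 2)) ∈ exceptionalUnion :=
    fun n hn => Set.mem_biUnion (by grind) (sub_six_div_mem_exceptionalSet (hν n hn))
  have hlim := tendsto_sub_six_div_atTop.comp tendsto_natCast_mul_succ_atTop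
  have hclosure : (1 / 2 : ℝ) ∈ closure exceptionalUnion := by
    refine mem_closure_of_tendsto hlim ?_
    filter_upwards [eventually_ge_atTop 3] with n hn
    simpa using hmem n (by exact_mod_cast hn)
  refine ⟨?_, fun n hn => ⟨hmem n hn, sub_six_div_lt_half (hν n hn)⟩, hlim⟩
  exact (isLUB_of_mem_closure (fun _ => le_half_of_mem_exceptionalUnion) hclosure).csSup_eq
    ⟨_, hmem 3 le_rfl⟩
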